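/- arXiv:2109.02791 — 7 statements merged into one kernel-verified Lean document; each statement's English description precedes it below -/
import Mathlib

section
/- For every generalized Büchi automaton A = (Q, Σ, δ, q₀, F) with F = {F₁,…,F_f}, f ≥ 1, the embedded GBA Ā accepts exactly the same ω-language as A, i.e. L(Ā) = L(A). -/
open Set Classical

/-- Frontier update `f_V`: remove from the frontier `T` the indices of accepting sets
containing `q`; if nothing would remain, reset the frontier to the full family. -/

noncomputable def fV {Q : Type*} {f : ℕ} (Facc : Fin f → Set Q) (q : Q) (T : Set (Fin f)) :
    Set (Fin f) :=
  if (T \ {j | q ∈ Facc j}).Nonempty then T \ {j | q ∈ Facc j} else Set.univ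

/-- `r` is a run of the automaton with transition function `δ` and initial state `q0`
over the infinite word `w`. -/
def IsRun {Q A : Type*} (δ : Q → A → Set Q) (q0 : Q) (w : ℕ → A) (r : ℕ → Q) : Prop :=
  r 0 = q0 ∧ ∀ t, r (t + 1) ∈ δ (r t) (w t)

/-- The set of states occurring infinitely often along `r`. -/
def InfOcc {Q : Type*} (r : ℕ → Q) : Set Q := {q | {t | r t = q}.Infinite}

/-- The ω-language of a generalized Büchi automaton: words admitting a run that meets
every accepting set infinitely often. -/
def GBALang {Q A : Type*} {f : ℕ} (δ : Q → A → Set Q) (q0 : Q)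
    (Facc : Fin f → Set Q) : Set (ℕ → A) :=
  {w | ∃ r : ℕ → Q, IsRun δ q0 w r ∧ ∀ i : Fin f, (InfOcc r ∩ Facc i).Nonempty}

/-- Transition function of the embedded GBA: move in the first component and update the
frontier in the second component via `fV`. -/
def embDelta {Q A : Type*} {f : ℕ} (δ : Q → A → Set Q) (Facc : Fin f → Set Q)
    (p : Q × Set (Fin f)) (a : A) : Set (Q × Set (Fin f)) :=
  {p' | p'.1 ∈ δ p.1 a ∧ p'.2 = fV Facc p.1 p.2}

/-- Accepting sets of the embedded GBA: the state is in `Facc i` and `i` is still in the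
frontier. -/
def embAcc {Q : Type*} {f : ℕ} (Facc : Fin f → Set Q) (i : Fin f) :
    Set (Q × Set (Fin f)) :=
  {p | p.1 ∈ Facc i ∧ i ∈ p.2}

lemma fV_nonempty {Q : Type*} {f : ℕ} (hf : 1 ≤ f) (Facc : Fin f → Set Q) (q : Q)
    (T : Set (Fin f)) : (fV Facc q T).Nonempty := by
  unfold fV
  split
  · assumption
  · exact ⟨⟨0, hf⟩, Set.mem_univ _⟩

lemma infinite_fiber {β : Type*} [Finite β] {s : Set ℕ} (hs : s.Infinite) (g : ℕ → β) :
    ∃ b, (s ∩ {t | g t = b}).Infinite := by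
  by_contra h
  push_neg at h
  have hsub : s ⊆ ⋃ b : β, s ∩ {t | g t = b} := fun t ht => Set.mem_iUnion.2 ⟨g t, ht, rfl⟩
  exact hs ((Set.finite_iUnion (fun b => h b)).subset hsub)

lemma infinite_of_unbdd {s : Set ℕ} (h : ∀ n, ∃ m ∈ s, n ≤ m) : s.Infinite := by
  apply Set.infinite_of_not_bddAbove
  rintro ⟨b, hb⟩
  obtain ⟨m, hm, hbm⟩ := h (b + 1)
  exact absurd (hb hm) (by omega)

/-- For every generalized Büchi automaton, the embedded GBA accepts
exactly the same ω-language. -/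
theorem emb_GBA_lang_eq {Q A : Type*} [Finite Q] [Finite A] {f : ℕ} (hf : 1 ≤ f)
    (δ : Q → A → Set Q) (q0 : Q) (Facc : Fin f → Set Q) :
    GBALang (embDelta δ Facc) (q0, (Set.univ : Set (Fin f))) (embAcc Facc) =
      GBALang δ q0 Facc := by
  ext w
  constructor
  · -- projection direction
    rintro ⟨rb, ⟨h0, hstep⟩, hacc⟩
    refine ⟨fun t => (rb t).1, ⟨by simp [h0], fun t => (hstep t).1⟩, fun i => ?_⟩
    obtain ⟨p, hpinf, hpacc⟩ := hacc i
    exact ⟨p.1, hpinf.mono (fun t ht => congrArg Prod.fst ht), hpacc.1⟩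
  · rintro ⟨r, ⟨h0, hstep⟩, hacc⟩
    -- frontier sequence
    let T : ℕ → Set (Fin f) := fun t => Nat.rec Set.univ (fun t Tt => fV Facc (r t) Tt) t
    have hT0 : T 0 = Set.univ := rfl
    have hTs : ∀ t, T (t + 1) = fV Facc (r t) (T t) := fun t => rfl
    have hTne : ∀ t, (T t).Nonempty := by
      intro t
      cases t with
      | zero => exact ⟨⟨0, hf⟩, Set.mem_univ _⟩
      | succ t => rw [hTs]; exact fV_nonempty hf Facc _ _
    -- each accepting set is hit at arbitrarily late times
    have hhit : ∀ (i : Fin f) (t : ℕ), ∃ s, t ≤ s ∧ r s ∈ Facc i := by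
      intro i t
      obtain ⟨q, hqinf, hq⟩ := hacc i
      obtain ⟨s, hs, hts⟩ := hqinf.exists_gt t
      exact ⟨s, le_of_lt hts, hs ▸ hq⟩
    -- resets happen at arbitrarily late times
    have hreset : ∀ t, ∃ s, t ≤ s ∧ T s \ {j | r s ∈ Facc j} = ∅ := by
      intro t
      by_contra hno
      push_neg at hno
      have hno' : ∀ s, t ≤ s → (T s \ {j | r s ∈ Facc j}).Nonempty := by
        intro s hs
        exact hno s hs
      have hstep' : ∀ s, t ≤ s → T (s + 1) = T s \ {j | r s ∈ Facc j} := by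
        intro s hs
        rw [hTs]; unfold fV; rw [if_pos (hno' s hs)]
      -- once removed, an index stays out
      have hout : ∀ (j : Fin f) (s : ℕ), t ≤ s → j ∉ T (s + 1) → ∀ m, j ∉ T (s + 1 + m) := by
        intro j s hs hj m
        induction m with
        | zero => exact hj
        | succ m ih =>
          have : T (s + 1 + m + 1) = T (s + 1 + m) \ {j | r (s + 1 + m) ∈ Facc j} :=
            hstep' _ (by omega)
          rw [show s + 1 + (m + 1) = s + 1 + m + 1 by omega, this]
          exact fun hc => ih hc.1
      choose g hg1 hg2 using fun j => hhit j t
      set M := Finset.univ.sup (fun j : Fin f => g j + 1) with hM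
      obtain ⟨j, hj⟩ := hTne M
      have hjout : j ∉ T M := by
        have hMge : g j + 1 ≤ M := by
          rw [hM]; exact Finset.le_sup (f := fun j : Fin f => g j + 1) (Finset.mem_univ j)
        have hrm : j ∉ T (g j + 1) := by
          rw [hstep' _ (hg1 j)]
          exact fun hc => hc.2 (hg2 j)
        have := hout j (g j) (hg1 j) hrm (M - (g j + 1))
        rwa [show g j + 1 + (M - (g j + 1)) = M by omega] at this
      exact hjout hj
    refine ⟨fun t => (r t, T t), ⟨by show (r 0, T 0) = (q0, Set.univ); rw [h0, hT0],
      fun t => ⟨hstep t, hTs t⟩⟩, fun i => ?_⟩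
    -- key: the event "r t ∈ Facc i ∧ i ∈ T t" happens infinitely often
    have hinf : {t | r t ∈ Facc i ∧ i ∈ T t}.Infinite := by
      apply infinite_of_unbdd
      intro N
      by_contra hno
      push_neg at hno
      have hno' : ∀ s, N ≤ s → ¬(r s ∈ Facc i ∧ i ∈ T s) := by
        intro s hs hc
        exact absurd (hno s hc) (not_lt.2 hs)
      obtain ⟨s, hNs, hres⟩ := hreset N
      -- after the reset at s, i stays in the frontier forever
      have hstays : ∀ m, i ∈ T (s + 1 + m) := by
        intro m
        induction m with
        | zero =>
          rw [hTs]; unfold fV; rw [if_neg (by rw [hres]; exact Set.not_nonempty_empty)]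
          exact Set.mem_univ _
        | succ m ih =>
          have hnacc : r (s + 1 + m) ∉ Facc i :=
            fun hc => hno' (s + 1 + m) (by omega) ⟨hc, ih⟩
          rw [show s + 1 + (m + 1) = (s + 1 + m) + 1 by omega, hTs]
          unfold fV
          split
          · exact ⟨ih, hnacc⟩
          · exact Set.mem_univ _
      obtain ⟨s', hss', hres'⟩ := hreset (s + 1)
      have hiT : i ∈ T s' := by
        have := hstays (s' - (s + 1))
        rwa [show s + 1 + (s' - (s + 1)) = s' by omega] at this
      have hracc : r s' ∈ Facc i := by
        by_contra hc
        exact absurd hres' (Set.nonempty_iff_ne_empty.1 ⟨i, hiT, hc⟩)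
      exact hno' s' (by omega) ⟨hracc, hiT⟩
    -- pigeonhole to get a single infinitely-recurring accepting state
    obtain ⟨p, hp⟩ := infinite_fiber hinf (fun t => ((r t, T t) : Q × Set (Fin f)))
    obtain ⟨t0, ht0⟩ := hp.nonempty
    refine ⟨p, hp.mono (fun t ht => ht.2), ?_⟩
    have hpe : p = (r t0, T t0) := ht0.2.symm
    rw [hpe]
    exact ⟨ht0.1.1, ht0.1.2⟩
end

section
/- Let A be a generalized Büchi automaton with accepting family F = {F₁,…,F_f}, f ≥ 1, and let r = r₀r₁… be an accepting run of A over an infinite word w (so inf(r) ∩ F_i ≠ ∅ for every i). Define T₀ = F and T_{t+1} = f_V(r_t, T_t) for all t ≥ 0. Then r̄ = (r₀,T₀)(r₁,T₁)… is a run of the embedded GBA Ā over w, and it is accepting for Ā, i.e. inf(r̄) ∩ F̄_i ≠ ∅ for every i ∈ {1,…,f}. -/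
open Set Classical

/-- Lifting an accepting run of `A` with the synchronously updated
frontier yields an accepting run of the embedded GBA. -/
theorem emb_run_of_accepting_run {Q A : Type*} [Finite Q] [Finite A] {f : ℕ}
    (hf : 1 ≤ f) (δ : Q → A → Set Q) (q0 : Q) (Facc : Fin f → Set Q)
    (w : ℕ → A) (r : ℕ → Q) (hrun : IsRun δ q0 w r)
    (hacc : ∀ i : Fin f, (InfOcc r ∩ Facc i).Nonempty)
    (T : ℕ → Set (Fin f)) (hT0 : T 0 = Set.univ)
    (hT : ∀ t, T (t + 1) = fV Facc (r t) (T t)) :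
    IsRun (embDelta δ Facc) (q0, (Set.univ : Set (Fin f))) w (fun t => (r t, T t)) ∧
      ∀ i : Fin f, (InfOcc (fun t => (r t, T t)) ∩ embAcc Facc i).Nonempty := by
  obtain ⟨h0, hstep⟩ := hrun
  have hFin : ∀ s : Set (Fin f), s.Finite := fun s => s.toFinite
  haveI hne : Nonempty (Fin f) := ⟨⟨0, hf⟩⟩
  have hTne : ∀ t, (T t).Nonempty := by
    intro t
    cases t with
    | zero => rw [hT0]; exact Set.univ_nonempty
    | succ n =>
      rw [hT n]
      unfold fV
      split
      · assumption
      · exact Set.univ_nonempty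
  have hvis : ∀ (j : Fin f) (N : ℕ), ∃ t, N ≤ t ∧ r t ∈ Facc j := by
    intro j N
    obtain ⟨q, hq1, hq2⟩ := hacc j
    obtain ⟨t, htmem, hlt⟩ := hq1.exists_gt N
    exact ⟨t, hlt.le, by rw [htmem]; exact hq2⟩
  have key : ∀ (i : Fin f) (N : ℕ), ∃ t, N ≤ t ∧ r t ∈ Facc i ∧ i ∈ T t := by
    intro i N
    by_contra hcon
    push_neg at hcon
    by_cases hex : ∃ t, N ≤ t ∧ i ∈ T t
    · obtain ⟨t0, ht0N, ht0⟩ := hex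
      have hpers : ∀ s, i ∈ T (t0 + s) := by
        intro s
        induction s with
        | zero => simpa using ht0
        | succ n ih =>
          have hN : N ≤ t0 + n := le_trans ht0N (Nat.le_add_right _ _)
          have hnotF : r (t0 + n) ∉ Facc i := fun hF => hcon _ hN hF ih
          rw [show t0 + (n + 1) = (t0 + n) + 1 from rfl, hT]
          unfold fV
          split
          · exact ⟨ih, hnotF⟩
          · exact Set.mem_univ i
      obtain ⟨t, htt0, htF⟩ := hvis i t0
      refine hcon t (le_trans ht0N htt0) htF ?_
      have := hpers (t - t0)
      rwa [Nat.add_sub_cancel' htt0] at this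
    · push_neg at hex
      have hnores : ∀ t, N ≤ t → T (t + 1) = T t \ {j | r t ∈ Facc j} := by
        intro t htN
        have h1 := hT t
        unfold fV at h1
        by_cases hc : (T t \ {j | r t ∈ Facc j}).Nonempty
        · rwa [if_pos hc] at h1
        · rw [if_neg hc] at h1
          exact absurd (by rw [h1]; exact Set.mem_univ i : i ∈ T (t + 1))
            (hex (t + 1) (le_trans htN (Nat.le_succ t)))
      have hchain : ∀ a, N ≤ a → ∀ b, T (a + b) ⊆ T a := by
        intro a haN b
        induction b with
        | zero => simp
        | succ n ih =>
          rw [show a + (n + 1) = (a + n) + 1 from rfl,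
            hnores (a + n) (le_trans haN (Nat.le_add_right _ _))]
          exact subset_trans Set.diff_subset ih
      set g : ℕ → ℕ := fun t => (T t).ncard with hg
      have hgset : (g '' {t | N ≤ t}).Nonempty := ⟨g N, ⟨N, le_refl N, rfl⟩⟩
      obtain ⟨t1, ht1N, ht1⟩ : ∃ t1, N ≤ t1 ∧ g t1 = sInf (g '' {t | N ≤ t}) := by
        obtain ⟨t1, h1, h2⟩ := Nat.sInf_mem hgset
        exact ⟨t1, h1, h2⟩
      have hgc : ∀ s, t1 ≤ s → g s = g t1 := by
        intro s hs
        have h1 : g s ≤ g t1 := by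
          have hsub := hchain t1 ht1N (s - t1)
          rw [Nat.add_sub_cancel' hs] at hsub
          exact Set.ncard_le_ncard hsub (hFin _)
        have h2 : sInf (g '' {t | N ≤ t}) ≤ g s := Nat.sInf_le ⟨s, le_trans ht1N hs, rfl⟩
        omega
      obtain ⟨j, hj⟩ := hTne t1
      obtain ⟨s, hst1, hsF⟩ := hvis j t1
      have hdrop : ∃ u, t1 ≤ u ∧ j ∈ T u ∧ j ∉ T (u + 1) := by
        by_cases hjs : j ∈ T s
        · refine ⟨s, hst1, hjs, ?_⟩
          rw [hnores s (le_trans ht1N hst1)]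
          exact fun hmem => hmem.2 hsF
        · have haux : ∀ b, j ∉ T (t1 + b) → ∃ u, t1 ≤ u ∧ j ∈ T u ∧ j ∉ T (u + 1) := by
            intro b
            induction b with
            | zero => intro hb; exact absurd hj (by simpa using hb)
            | succ n ih =>
              intro hb
              by_cases hjn : j ∈ T (t1 + n)
              · exact ⟨t1 + n, Nat.le_add_right _ _, hjn, hb⟩
              · exact ih hjn
          have := haux (s - t1)
          rw [Nat.add_sub_cancel' hst1] at this
          exact this hjs
      obtain ⟨u, hut1, hju, hju'⟩ := hdrop
      have huN : N ≤ u := le_trans ht1N hut1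
      have hsub' : T (u + 1) ⊆ T u := by
        rw [hnores u huN]; exact Set.diff_subset
      have hssub : T (u + 1) ⊂ T u := by
        rw [Set.ssubset_def]
        exact ⟨hsub', fun h => hju' (h hju)⟩
      have hlt : g (u + 1) < g u := Set.ncard_lt_ncard hssub (hFin _)
      have e1 := hgc u hut1
      have e2 := hgc (u + 1) (le_trans hut1 (Nat.le_succ u))
      omega
  constructor
  · constructor
    · simp [h0, hT0]
    · intro t; exact ⟨hstep t, hT t⟩
  · intro i
    have hSinf : {t | r t ∈ Facc i ∧ i ∈ T t}.Infinite := by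
      apply Set.infinite_of_not_bddAbove
      rintro ⟨b, hb⟩
      obtain ⟨t, htb, h1, h2⟩ := key i (b + 1)
      have := hb (⟨h1, h2⟩ : t ∈ {t | r t ∈ Facc i ∧ i ∈ T t})
      omega
    haveI : Infinite ↥{t | r t ∈ Facc i ∧ i ∈ T t} := hSinf.to_subtype
    obtain ⟨p, hp⟩ := Finite.exists_infinite_fiber
      (fun t : ↥{t | r t ∈ Facc i ∧ i ∈ T t} => ((r t.1, T t.1) : Q × Set (Fin f)))
    haveI := hp
    obtain ⟨x⟩ : Nonempty ↥((fun t : ↥{t | r t ∈ Facc i ∧ i ∈ T t} =>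
        ((r t.1, T t.1) : Q × Set (Fin f))) ⁻¹' {p}) := inferInstance
    have hxp : (r x.1.1, T x.1.1) = p := x.2
    have hpacc : p ∈ embAcc Facc i := by
      rw [← hxp]; exact ⟨x.1.2.1, x.1.2.2⟩
    refine ⟨p, ?_, hpacc⟩
    show {t | (r t, T t) = p}.Infinite
    apply Set.infinite_of_injective_forall_mem
      (f := fun y : ↥((fun t : ↥{t | r t ∈ Facc i ∧ i ∈ T t} =>
        ((r t.1, T t.1) : Q × Set (Fin f))) ⁻¹' {p}) => (y.1.1 : ℕ))
    · intro a b hab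
      apply Subtype.ext; apply Subtype.ext; exact hab
    · intro a
      exact a.2
end

section
/- Let A be a generalized Büchi automaton with accepting family F = {F₁,…,F_f}, f ≥ 1, and let r̄ = (r₀,T₀)(r₁,T₁)… be an accepting run of the embedded GBA Ā over an infinite word w (so inf(r̄) ∩ F̄_i ≠ ∅ for every i). Then the projection r = r₀r₁… onto the first components is a run of A over w, and it is accepting for A, i.e. inf(r) ∩ F_i ≠ ∅ for every i ∈ {1,…,f}. -/
open Set Classical

/-- Projecting an accepting run of the embedded GBA onto its first
components yields an accepting run of the original GBA. -/
theorem proj_run_of_emb_accepting_run {Q A : Type*} [Finite Q] [Finite A] {f : ℕ}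
    (hf : 1 ≤ f) (δ : Q → A → Set Q) (q0 : Q) (Facc : Fin f → Set Q)
    (w : ℕ → A) (rbar : ℕ → Q × Set (Fin f))
    (hrun : IsRun (embDelta δ Facc) (q0, (Set.univ : Set (Fin f))) w rbar)
    (hacc : ∀ i : Fin f, (InfOcc rbar ∩ embAcc Facc i).Nonempty) :
    IsRun δ q0 w (fun t => (rbar t).1) ∧
      ∀ i : Fin f, (InfOcc (fun t => (rbar t).1) ∩ Facc i).Nonempty := by
  obtain ⟨h0, hstep⟩ := hrun
  refine ⟨⟨by show (rbar 0).1 = q0; rw [h0], fun t => (hstep t).1⟩, fun i => ?_⟩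
  obtain ⟨p, hp, hpF, _⟩ := hacc i
  exact ⟨p.1, hp.mono fun t ht => by show (rbar t).1 = p.1; rw [ht], hpF⟩
end

section
/- Let A be a generalized Büchi automaton with accepting family F = {F₁,…,F_f}, f ≥ 1, and let r̄ = (r₀,T₀)(r₁,T₁)… be any run of the embedded GBA Ā. If r̄ visits some accepting set F̄_j infinitely often (inf(r̄) ∩ F̄_j ≠ ∅ for some j), then r̄ visits every accepting set infinitely often: inf(r̄) ∩ F̄_i ≠ ∅ for all i ∈ {1,…,f}. (This is the paper's claim that the embedded-automaton design ensures all accepting sets of the original automaton are visited in each round, so that a single accepting set suffices to witness the full generalized Büchi condition under deterministic policies.) -/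
open Set Classical

/-- If a run of the embedded GBA visits some accepting set infinitely
often, then it visits every accepting set infinitely often. -/
theorem emb_one_acc_implies_all {Q A : Type*} [Finite Q] [Finite A] {f : ℕ}
    (hf : 1 ≤ f) (δ : Q → A → Set Q) (q0 : Q) (Facc : Fin f → Set Q)
    (w : ℕ → A) (rbar : ℕ → Q × Set (Fin f))
    (hrun : IsRun (embDelta δ Facc) (q0, (Set.univ : Set (Fin f))) w rbar)
    (hj : ∃ j : Fin f, (InfOcc rbar ∩ embAcc Facc j).Nonempty) :
    ∀ i : Fin f, (InfOcc rbar ∩ embAcc Facc i).Nonempty := by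
  obtain ⟨j, qT, hqTinf, hqTacc⟩ := hj
  set r : ℕ → Q := fun t => (rbar t).1 with hr
  set T : ℕ → Set (Fin f) := fun t => (rbar t).2 with hTdef
  obtain ⟨hinit, hstep⟩ := hrun
  have hT : ∀ t, T (t + 1) = fV Facc (r t) (T t) := fun t => (hstep t).2
  have hS : {t | rbar t = qT}.Infinite := hqTinf
  -- infinitely many resets
  have resetInf : ∀ n, ∃ t, n ≤ t ∧ ¬ (T t \ {k | r t ∈ Facc k}).Nonempty := by
    intro n
    by_contra h
    push_neg at h
    obtain ⟨t, htS, htn⟩ := hS.exists_gt n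
    have hjt : j ∈ T t := by
      have : T t = qT.2 := by simp only [hTdef]; rw [htS]
      rw [this]; exact hqTacc.2
    have hjF : r t ∈ Facc j := by
      have : r t = qT.1 := by simp only [hr]; rw [htS]
      rw [this]; exact hqTacc.1
    have hnot : ∀ s, j ∉ T (t + 1 + s) := by
      intro s
      induction s with
      | zero =>
        rw [Nat.add_zero, hT, fV, if_pos (h t (le_of_lt htn))]
        intro hc
        exact hc.2 hjF
      | succ m ih =>
        rw [show t + 1 + (m + 1) = (t + 1 + m) + 1 by omega, hT, fV,
          if_pos (h _ (by omega))]
        intro hc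
        exact ih hc.1
    obtain ⟨t', ht'S, ht'n⟩ := hS.exists_gt (t + 1)
    have hjt' : j ∈ T t' := by
      have : T t' = qT.2 := by simp only [hTdef]; rw [ht'S]
      rw [this]; exact hqTacc.2
    have := hnot (t' - (t + 1))
    rw [show t + 1 + (t' - (t + 1)) = t' by omega] at this
    exact this hjt'
  -- every accepting set is visited beyond any bound
  have visitInf : ∀ i : Fin f, ∀ n, ∃ t, n ≤ t ∧ rbar t ∈ embAcc Facc i := by
    intro i n
    obtain ⟨u, hun, hur⟩ := resetInf n
    have hTu : T (u + 1) = Set.univ := by rw [hT, fV, if_neg hur]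
    obtain ⟨v, hv, hvr⟩ := resetInf (u + 1)
    by_contra hno
    push_neg at hno
    have key : ∀ s, u + 1 + s ≤ v → i ∈ T (u + 1 + s) := by
      intro s
      induction s with
      | zero => intro _; rw [Nat.add_zero, hTu]; trivial
      | succ m ih =>
        intro hle
        have hi := ih (by omega)
        have hnv : rbar (u + 1 + m) ∉ embAcc Facc i := hno _ (by omega)
        rw [show u + 1 + (m + 1) = (u + 1 + m) + 1 by omega, hT]
        by_cases hne : (T (u + 1 + m) \ {k | r (u + 1 + m) ∈ Facc k}).Nonempty
        · rw [fV, if_pos hne]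
          refine ⟨hi, fun hFi => hnv ⟨hFi, hi⟩⟩
        · rw [fV, if_neg hne]; trivial
    have hiv : i ∈ T v := by
      have := key (v - (u + 1)) (by omega)
      rwa [show u + 1 + (v - (u + 1)) = v by omega] at this
    have hrv : r v ∈ Facc i := by
      by_contra hc
      exact hvr ⟨i, hiv, hc⟩
    exact hno v (by omega) ⟨hrv, hiv⟩
  intro i
  have hVinf : {t | rbar t ∈ embAcc Facc i}.Infinite := by
    apply Set.infinite_of_not_bddAbove
    rintro ⟨b, hb⟩
    obtain ⟨t, hbt, ht⟩ := visitInf i (b + 1)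
    have := hb ht
    omega
  by_contra hcon
  push_neg at hcon
  have hfin : {t | rbar t ∈ embAcc Facc i}.Finite := by
    have hsub : {t | rbar t ∈ embAcc Facc i} ⊆
        ⋃ p ∈ embAcc Facc i, {t | rbar t = p} := by
      intro t ht; exact Set.mem_biUnion ht rfl
    refine Set.Finite.subset (Set.Finite.biUnion (Set.toFinite _) fun p hp => ?_) hsub
    have hnp : p ∉ InfOcc rbar := fun h =>
      Set.eq_empty_iff_forall_notMem.mp hcon p ⟨h, hp⟩
    exact Set.not_infinite.mp hnp
  exact hVinf hfin
end

section
/- Let A be a generalized Büchi automaton with accepting family F = {F₁,…,F_f}, f ≥ 1, and let r̄ = (r₀,T₀)(r₁,T₁)… be a run of the embedded GBA Ā. Then r̄ satisfies the generalized Büchi acceptance condition of Ā (inf(r̄) ∩ F̄_i ≠ ∅ for every i) if and only if resets occur at infinitely many steps, i.e., the set {t : T_t ∖ F(r_t) = ∅} is infinite. (This is the paper's characterization that acceptance of the embedded automaton corresponds to completing infinitely many rounds, each round visiting all accepting sets.) -/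
open Set Classical

lemma exists_infinite_fiber_on {β : Type*} [Finite β] {S : Set ℕ} (hS : S.Infinite)
    (g : ℕ → β) : ∃ b, {t | t ∈ S ∧ g t = b}.Infinite := by
  haveI := hS.to_subtype
  obtain ⟨b, hb⟩ := Finite.exists_infinite_fiber (fun t : S => g t)
  refine ⟨b, Set.Infinite.mono ?_ ((Set.infinite_coe_iff.mp hb).image
    (Subtype.val_injective.injOn))⟩
  rintro t ⟨⟨t', ht'⟩, hmem, rfl⟩
  exact ⟨ht', hmem⟩

/-- A run of the embedded GBA satisfies the generalized Büchi
acceptance condition iff frontier resets occur at infinitely many steps. -/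
theorem emb_acc_iff_infinitely_many_resets {Q A : Type*} [Finite Q] [Finite A] {f : ℕ}
    (hf : 1 ≤ f) (δ : Q → A → Set Q) (q0 : Q) (Facc : Fin f → Set Q)
    (w : ℕ → A) (rbar : ℕ → Q × Set (Fin f))
    (hrun : IsRun (embDelta δ Facc) (q0, (Set.univ : Set (Fin f))) w rbar) :
    (∀ i : Fin f, (InfOcc rbar ∩ embAcc Facc i).Nonempty) ↔
      {t : ℕ | (rbar t).2 \ {j | (rbar t).1 ∈ Facc j} = ∅}.Infinite := by
  obtain ⟨hinit, hstep⟩ := hrun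
  have hT : ∀ t, (rbar (t + 1)).2 = fV Facc (rbar t).1 (rbar t).2 := fun t => (hstep t).2
  constructor
  · intro hacc
    by_contra hfin
    rw [Set.not_infinite] at hfin
    obtain ⟨N, hN⟩ := hfin.bddAbove
    have hnores : ∀ t, N < t → ((rbar t).2 \ {j | (rbar t).1 ∈ Facc j}).Nonempty := by
      intro t ht
      rw [Set.nonempty_iff_ne_empty]
      intro h
      exact absurd (hN h) (not_le.mpr ht)
    have hmono : ∀ a b, N < a → a ≤ b → (rbar b).2 ⊆ (rbar a).2 := by
      intro a b ha hab
      induction b, hab using Nat.le_induction with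
      | base => exact subset_rfl
      | succ b hb ih =>
        refine subset_trans ?_ ih
        rw [hT b, fV, if_pos (hnores b (lt_of_lt_of_le ha hb))]
        exact Set.diff_subset
    obtain ⟨qb, hqInf, hqF, hqT⟩ := hacc ⟨0, hf⟩
    obtain ⟨t, ht, hNt⟩ := hqInf.exists_gt N
    obtain ⟨t', ht', htt'⟩ := hqInf.exists_gt t
    have h1 : (⟨0, hf⟩ : Fin f) ∉ (rbar (t + 1)).2 := by
      rw [hT t, fV, if_pos (hnores t hNt)]
      intro h
      exact h.2 (by rw [Set.mem_setOf_eq, ht]; exact hqF)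
    have h2 : (⟨0, hf⟩ : Fin f) ∈ (rbar t').2 := by
      rw [show rbar t' = qb from ht']; exact hqT
    exact h1 (hmono (t + 1) t' (Nat.lt_succ_of_lt hNt) htt' h2)
  · intro hres i
    have hub : ∀ n, ∃ t, n < t ∧ (rbar t).1 ∈ Facc i ∧ i ∈ (rbar t).2 := by
      intro n
      obtain ⟨t₀, ht₀mem, hnt₀⟩ := hres.exists_gt n
      obtain ⟨t₁, ht₁mem, ht₀t₁⟩ := hres.exists_gt t₀
      set P : ℕ → Prop := fun s => t₀ < s ∧ i ∈ (rbar s).2 with hP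
      have hPt₀1 : P (t₀ + 1) := by
        refine ⟨Nat.lt_succ_self _, ?_⟩
        rw [hT t₀, fV, if_neg (by rw [Set.not_nonempty_iff_eq_empty]; exact ht₀mem)]
        exact Set.mem_univ i
      have hle : t₀ + 1 ≤ t₁ := ht₀t₁
      have hPs : P (Nat.findGreatest P t₁) := Nat.findGreatest_spec hle hPt₀1
      set s := Nat.findGreatest P t₁ with hs
      have hsle : s ≤ t₁ := Nat.findGreatest_le t₁
      by_cases hst : s = t₁
      · refine ⟨t₁, lt_trans hnt₀ (lt_of_lt_of_le (hPs.1) (hst ▸ hsle)), ?_, hst ▸ hPs.2⟩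
        by_contra h
        have hmem : i ∈ (rbar t₁).2 \ {j | (rbar t₁).1 ∈ Facc j} := ⟨hst ▸ hPs.2, h⟩
        rw [ht₁mem] at hmem
        exact hmem
      · have hslt : s < t₁ := lt_of_le_of_ne hsle hst
        have hnP : ¬ P (s + 1) :=
          Nat.findGreatest_is_greatest (Nat.lt_succ_self s) hslt
        have hiT : i ∉ (rbar (s + 1)).2 := fun h => hnP ⟨Nat.lt_succ_of_lt hPs.1, h⟩
        rw [hT s, fV] at hiT
        by_cases hne : ((rbar s).2 \ {j | (rbar s).1 ∈ Facc j}).Nonempty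
        · rw [if_pos hne] at hiT
          have hFs : (rbar s).1 ∈ Facc i := by
            by_contra h
            exact hiT ⟨hPs.2, h⟩
          exact ⟨s, lt_trans hnt₀ hPs.1, hFs, hPs.2⟩
        · rw [if_neg hne] at hiT
          exact absurd (Set.mem_univ i) hiT
    have hS : {t | (rbar t).1 ∈ Facc i ∧ i ∈ (rbar t).2}.Infinite := by
      by_contra hfin
      rw [Set.not_infinite] at hfin
      obtain ⟨n, hn⟩ := hfin.bddAbove
      obtain ⟨t, hnt, hta⟩ := hub n
      exact absurd (hn hta) (not_le.mpr hnt)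
    obtain ⟨qb, hqb⟩ := exists_infinite_fiber_on hS rbar
    obtain ⟨t, ht, htq⟩ := hqb.nonempty
    refine ⟨qb, ?_, ?_, ?_⟩
    · exact hqb.mono fun t ht => ht.2
    · rw [← htq]; exact ht.1
    · rw [← htq]; exact ht.2
end

section
/- Let A be a generalized Büchi automaton with accepting family F = {F₁,…,F_f}, f ≥ 1, let r̄ = (r₀,T₀)(r₁,T₁)… be a run of the embedded GBA Ā, and let t₁ < t₂ be two consecutive reset steps along r̄ (resets occur at t₁ and t₂ and at no step strictly between them). Then for every i ∈ {1,…,f} there exists a step t with t₁ < t ≤ t₂ such that (r_t, T_t) ∈ F̄_i. In other words, every round of the embedded automaton (the segment between consecutive frontier resets) visits every accepting set. -/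
open Set Classical

lemma exists_flip (P : ℕ → Prop) {a b : ℕ} (hab : a ≤ b) (ha : P a) (hb : ¬ P b) :
    ∃ t, a ≤ t ∧ t < b ∧ P t ∧ ¬ P (t + 1) := by
  by_contra h
  push_neg at h
  have key : ∀ t, a ≤ t → (t ≤ b → P t) := by
    intro t hat
    induction t, hat using Nat.le_induction with
    | base => intro _; exact ha
    | succ n hn ih =>
      intro hnb
      have hnb' : n < b := Nat.lt_of_succ_le hnb
      exact h n hn hnb' (ih hnb'.le)
  exact hb (key b hab le_rfl)

/-- Between two consecutive frontier resets, a run of the embedded GBA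
visits every accepting set of the embedded automaton. -/
theorem emb_round_visits_all_acc {Q A : Type*} [Finite Q] [Finite A] {f : ℕ}
    (hf : 1 ≤ f) (δ : Q → A → Set Q) (q0 : Q) (Facc : Fin f → Set Q)
    (w : ℕ → A) (rbar : ℕ → Q × Set (Fin f))
    (hrun : IsRun (embDelta δ Facc) (q0, (Set.univ : Set (Fin f))) w rbar)
    (t1 t2 : ℕ) (hlt : t1 < t2)
    (hres1 : (rbar t1).2 \ {j | (rbar t1).1 ∈ Facc j} = ∅)
    (hres2 : (rbar t2).2 \ {j | (rbar t2).1 ∈ Facc j} = ∅)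
    (hbetween : ∀ t, t1 < t → t < t2 → (rbar t).2 \ {j | (rbar t).1 ∈ Facc j} ≠ ∅) :
    ∀ i : Fin f, ∃ t, t1 < t ∧ t ≤ t2 ∧ rbar t ∈ embAcc Facc i := by
  intro i
  have hstep : ∀ t, (rbar (t + 1)).2 = fV Facc (rbar t).1 (rbar t).2 := fun t =>
    (hrun.2 t).2
  by_cases hi : i ∈ (rbar t2).2
  · refine ⟨t2, hlt, le_rfl, ?_, hi⟩
    have : i ∉ (rbar t2).2 \ {j | (rbar t2).1 ∈ Facc j} := by rw [hres2]; exact notMem_empty i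
    simp only [Set.mem_diff, Set.mem_setOf_eq, not_and, not_not] at this
    exact this hi
  · have hP1 : i ∈ (rbar (t1 + 1)).2 := by
      rw [hstep t1, fV]
      have : ¬ ((rbar t1).2 \ {j | (rbar t1).1 ∈ Facc j}).Nonempty := by
        rw [hres1]; exact Set.not_nonempty_empty
      rw [if_neg this]; exact Set.mem_univ i
    obtain ⟨t, hat, htb, hPt, hPt1⟩ :=
      exists_flip (fun t => i ∈ (rbar t).2) (Nat.succ_le_of_lt hlt) hP1 hi
    have ht1 : t1 < t := hat
    have hnores := hbetween t ht1 htb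
    have hT : (rbar (t + 1)).2 = (rbar t).2 \ {j | (rbar t).1 ∈ Facc j} := by
      rw [hstep t, fV, if_pos (Set.nonempty_iff_ne_empty.mpr hnores)]
    refine ⟨t, ht1, htb.le, ?_, hPt⟩
    by_contra hnot
    exact hPt1 (hT ▸ ⟨hPt, hnot⟩)
end

section
/- Let α : ℝ → ℝ be locally Lipschitz with α(0) = 0 (in particular, any locally Lipschitz extended class-K function), and let y : [0,∞) → ℝ be differentiable with y′(t) ≥ −α(y(t)) for all t ≥ 0. If y(0) ≥ 0, then y(t) ≥ 0 for all t ≥ 0. -/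
open Set Filter Metric Real
open scoped Topology

/-- If `α` is locally Lipschitz with `α 0 = 0` and `y` is differentiable
on `[0,∞)` with `y′ t ≥ −α (y t)` there, then `y 0 ≥ 0` implies `y t ≥ 0` for all
`t ≥ 0` (forward invariance of the superlevel set of the barrier). -/
theorem cbf_forward_invariance (α : ℝ → ℝ) (hα : LocallyLipschitz α) (hα0 : α 0 = 0)
    (y y' : ℝ → ℝ)
    (hderiv : ∀ t : ℝ, 0 ≤ t → HasDerivAt y (y' t) t)
    (hineq : ∀ t : ℝ, 0 ≤ t → y' t ≥ -α (y t))
    (hy0 : y 0 ≥ 0) :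
    ∀ t : ℝ, 0 ≤ t → y t ≥ 0 := by
  by_contra h
  push_neg at h
  obtain ⟨t₁, ht₁0, hyt₁⟩ := h
  -- the set of times up to t₁ where y is nonneg
  set A : Set ℝ := {t | t ∈ Icc (0:ℝ) t₁ ∧ 0 ≤ y t} with hA
  have hA0 : (0:ℝ) ∈ A := ⟨⟨le_refl 0, ht₁0⟩, hy0⟩
  have hAne : A.Nonempty := ⟨0, hA0⟩
  have hAbdd : BddAbove A := ⟨t₁, fun t ht => ht.1.2⟩
  set s := sSup A with hs
  have hs0 : 0 ≤ s := le_csSup hAbdd hA0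
  have hst₁ : s ≤ t₁ := csSup_le hAne fun t ht => ht.1.2
  have hycont : ∀ t : ℝ, 0 ≤ t → ContinuousAt y t := fun t ht =>
    (hderiv t ht).continuousAt
  -- y is negative strictly after s (up to t₁)
  have hneg : ∀ t, s < t → t ≤ t₁ → y t < 0 := by
    intro t hst htt₁
    by_contra hge
    push_neg at hge
    exact absurd (le_csSup hAbdd ⟨⟨hs0.trans hst.le, htt₁⟩, hge⟩) (not_le.mpr hst)
  -- y s ≥ 0
  have hcl : s ∈ closure A := csSup_mem_closure hAne hAbdd
  have hys_nonneg : 0 ≤ y s := by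
    have hnb : (𝓝[A] s).NeBot := mem_closure_iff_nhdsWithin_neBot.mp hcl
    have htend : Tendsto y (𝓝[A] s) (𝓝 (y s)) :=
      ((hycont s hs0).continuousWithinAt).tendsto
    exact ge_of_tendsto htend (eventually_nhdsWithin_of_forall fun t ht => ht.2)
  have hst₁' : s < t₁ := lt_of_le_of_ne hst₁ (fun h => absurd (h ▸ hys_nonneg) (not_le.mpr hyt₁))
  -- y s ≤ 0, hence y s = 0
  have hys : y s = 0 := by
    refine le_antisymm ?_ hys_nonneg
    have hnb : (𝓝[>] s).NeBot := nhdsGT_neBot s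
    have htend : Tendsto y (𝓝[>] s) (𝓝 (y s)) :=
      ((hycont s hs0).continuousWithinAt).tendsto
    refine le_of_tendsto htend ?_
    filter_upwards [Ioo_mem_nhdsGT_of_mem (Set.left_mem_Ico.mpr hst₁')] with t ht
    exact (hneg t ht.1 ht.2.le).le
  -- local Lipschitz constant near 0
  obtain ⟨K, U, hU, hLip⟩ := hα 0
  obtain ⟨ε, hε, hball⟩ := Metric.mem_nhds_iff.mp hU
  -- choose b > s close to s with |y| < ε on [s, b]
  have : ∀ᶠ t in 𝓝 s, |y t| < ε := by
    have := (hycont s hs0).tendsto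
    have h1 : ∀ᶠ t in 𝓝 s, y t ∈ Metric.ball (y s) ε :=
      this (Metric.ball_mem_nhds _ hε)
    filter_upwards [h1] with t ht
    simpa [hys, Real.dist_eq] using ht
  obtain ⟨δ, hδ, hδball⟩ := Metric.eventually_nhds_iff_ball.mp this
  set b := min (s + δ / 2) t₁ with hb
  have hsb : s < b := lt_min (by linarith) hst₁'
  have hbt₁ : b ≤ t₁ := min_le_right _ _
  have hsmall : ∀ t ∈ Icc s b, |y t| < ε := by
    intro t ht
    apply hδball
    rw [Real.ball_eq_Ioo]
    constructor
    · linarith [ht.1]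
    · have := ht.2.trans (min_le_left _ _)
      linarith
  have hynonpos : ∀ t ∈ Icc s b, y t ≤ 0 := by
    intro t ht
    rcases eq_or_lt_of_le ht.1 with rfl | hlt
    · exact le_of_eq hys
    · exact (hneg t hlt (ht.2.trans hbt₁)).le
  -- apply Grönwall to f = -y on [s, b]
  have hcontOn : ContinuousOn (fun t => -y t) (Icc s b) := fun t ht =>
    ((hycont t (hs0.trans ht.1)).neg.continuousWithinAt)
  have hslope : ∀ x ∈ Ico s b, ∀ r, -y' x < r →
      ∃ᶠ z in 𝓝[>] x, (z - x)⁻¹ * ((fun t => -y t) z - (fun t => -y t) x) < r := by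
    intro x hx r hr
    have hd : HasDerivAt (fun t => -y t) (-y' x) x := (hderiv x (hs0.trans hx.1)).neg
    have := hasDerivAt_iff_tendsto_slope.mp hd
    have h2 : Tendsto (slope (fun t => -y t) x) (𝓝[>] x) (𝓝 (-y' x)) :=
      this.mono_left (nhdsWithin_mono x fun z hz => ne_of_gt hz)
    have h3 : ∀ᶠ z in 𝓝[>] x, slope (fun t => -y t) x z < r :=
      h2 (Iio_mem_nhds hr)
    refine h3.frequently.mono ?_
    intro z hz
    rwa [slope_def_field, div_eq_inv_mul] at hz
  have hbound : ∀ x ∈ Ico s b, -y' x ≤ (K : ℝ) * (-y x) + 0 := by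
    intro x hx
    have hx0 : (0:ℝ) ≤ x := hs0.trans hx.1
    have h1 : -y' x ≤ α (y x) := by linarith [hineq x hx0]
    have hxmem : x ∈ Icc s b := ⟨hx.1, hx.2.le⟩
    have hmem : y x ∈ U := hball (by simpa [Real.dist_eq] using hsmall x hxmem)
    have h0mem : (0:ℝ) ∈ U := hball (by simpa using hε)
    have h2 : dist (α (y x)) (α 0) ≤ (K : ℝ) * dist (y x) 0 := hLip.dist_le_mul _ hmem _ h0mem
    rw [hα0, dist_zero_right, dist_zero_right, Real.norm_eq_abs, Real.norm_eq_abs] at h2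
    have h3 : |y x| = -y x := abs_of_nonpos (hynonpos x ⟨hx.1, hx.2.le⟩)
    have h4 : α (y x) ≤ |α (y x)| := le_abs_self _
    rw [h3] at h2
    linarith
  have := le_gronwallBound_of_liminf_deriv_right_le hcontOn hslope
    (by simp [hys] : (fun t => -y t) s ≤ 0) hbound b ⟨hsb.le, le_refl b⟩
  rw [gronwallBound_ε0_δ0] at this
  have hyb : y b < 0 := hneg b hsb hbt₁
  have hthis : -y b ≤ 0 := this
  linarith
end
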